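/- Define x^{:0} = 1, x^{:k} = x·⌊x^{:(k-1)}⌋, a_k = {x^{:k}}, b_k = ⌊x^{:k}⌋. For every real x and every n ≥ 1, the finite-sum recurrence x·b_{n-1} = a_n + b_n implies by induction that x^n = Σ_{j=0}^{n} c_j b_{n-j} where c_0 = 1 and for j ≥ 1, c_j is the sum over compositions (m_1,...,m_r) of j of a_{m_1}·a_{m_2}·...·a_{m_r}. Equivalently: the formal power series identity 1/(1 - xz) = (1 + Σ_{k≥1} b_k z^k)/(1 - Σ_{k≥1} a_k z^k) holds, i.e. (1 - Σ_{k≥1} a_k z^k)·(Σ_{k≥0} x^k z^k) = 1 + Σ_{k≥1} b_k z^k as formal power series over ℝ. -/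
import Mathlib


/-- Iterated floor product: `x^{:0} = 1`, `x^{:k} = x * ⌊x^{:(k-1)}⌋`. -/
noncomputable def iterFloorPow (x : ℝ) : ℕ → ℝ
  | 0 => 1
  | k + 1 => x * ⌊iterFloorPow x k⌋

/-- `a_k = {x^{:k}}`. -/
noncomputable def aSeq (x : ℝ) (k : ℕ) : ℝ := Int.fract (iterFloorPow x k)

/-- `b_k = ⌊x^{:k}⌋` regarded as a real number. -/
noncomputable def bSeq (x : ℝ) (k : ℕ) : ℝ := (⌊iterFloorPow x k⌋ : ℝ)

lemma bSeq_zero (x : ℝ) : bSeq x 0 = 1 := by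
  simp [bSeq, iterFloorPow]

lemma rec_ab (x : ℝ) (n : ℕ) : x * bSeq x n = aSeq x (n+1) + bSeq x (n+1) := by
  have : aSeq x (n+1) + bSeq x (n+1) = iterFloorPow x (n+1) := by
    unfold aSeq bSeq; rw [Int.fract]; ring
  rw [this]
  show _ = x * (⌊iterFloorPow x n⌋ : ℝ)
  rfl

lemma key (x : ℝ) (n : ℕ) :
    ∑ j ∈ Finset.range (n+1), (if j = 0 then (1:ℝ) else -aSeq x j) * x ^ (n - j)
      = if n = 0 then 1 else bSeq x n := by
  induction n with
  | zero => simp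
  | succ n ih =>
    rw [Finset.sum_range_succ]
    have h1 : ∑ j ∈ Finset.range (n+1),
        (if j = 0 then (1:ℝ) else -aSeq x j) * x ^ (n + 1 - j)
        = x * ∑ j ∈ Finset.range (n+1),
        (if j = 0 then (1:ℝ) else -aSeq x j) * x ^ (n - j) := by
      rw [Finset.mul_sum]
      apply Finset.sum_congr rfl
      intro j hj
      have hj' : j ≤ n := Nat.lt_succ_iff.mp (Finset.mem_range.mp hj)
      have : n + 1 - j = (n - j) + 1 := by omega
      rw [this, pow_succ]
      ring
    rw [h1, ih]
    have hb : x * (if n = 0 then (1:ℝ) else bSeq x n) = x * bSeq x n := by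
      by_cases h : n = 0
      · simp [h, bSeq_zero]
      · simp [h]
    rw [hb, rec_ab x n]
    simp

open PowerSeries in
theorem powerSeries_identity (x : ℝ) :
    (PowerSeries.mk fun k : ℕ => if k = 0 then (1 : ℝ) else -aSeq x k)
        * (PowerSeries.mk fun k : ℕ => x ^ k)
      = PowerSeries.mk fun k : ℕ => if k = 0 then (1 : ℝ) else bSeq x k := by
  ext n
  rw [PowerSeries.coeff_mul]
  simp only [PowerSeries.coeff_mk]
  rw [Finset.Nat.sum_antidiagonal_eq_sum_range_succ_mk]
  simpa using key x n
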